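/- If the set function f : 2^V → ℝ≥0 is monotone, α-weakly DR-submodular for some α ∈ (0,1], and satisfies f(∅) = 0, then for every point x = (p_1,…,p_K) ∈ ∏_{k=1}^K Δ_{n_k} and every feasible subset S ⊆ V, one has ⟨ Σ_{k=1}^K (1/B_k)·1_{S∩V_k} − x, ∫_0^1 e^{α(z−1)} ∇F(z·x) dz ⟩ ≥ (1 − e^{−α})·f(S) − F(x). -/

import Mathlib

open Finset

noncomputable section

namespace Multinoulli

variable {K : ℕ}

/-- An element of the ground set `V`: a community index `k` together with the
index `m` of the element `v_k^m` inside its community `V_k`. -/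
abbrev Elem (n : Fin K → ℕ) := Σ k : Fin K, Fin (n k)

/-- A sampling slot: a community `k` together with a trial index `b ∈ {1,…,B_k}`. -/
abbrev Slot (B : Fin K → ℕ) := Σ k : Fin K, Fin (B k)

/-- A joint outcome of all the independent multinoulli trials; `none` encodes a
draw of `∅`, which contributes no element. -/
abbrev Choice (n B : Fin K → ℕ) := ∀ s : Slot B, Option (Fin (n s.1))

/-- The probability that `Multi(p_k)` (the `k`-th block of `x`) assigns to a given
outcome: `x ⟨k,m⟩` for the element `v_k^m` and `1 - Σ_m x ⟨k,m⟩` for `∅`. -/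
def prob (n : Fin K → ℕ) (x : Elem n → ℝ) (k : Fin K) : Option (Fin (n k)) → ℝ
  | some m => x ⟨k, m⟩
  | none => 1 - ∑ m : Fin (n k), x ⟨k, m⟩

/-- The probability of the joint outcome `e` (all trials are mutually independent). -/
def jointProb (n B : Fin K → ℕ) (x : Elem n → ℝ) (e : Choice n B) : ℝ :=
  ∏ s : Slot B, prob n x s.1 (e s)

/-- The subset of the ground set selected by the trials whose slot lies in `A`
(a draw of `∅` contributes no element to the union). -/
def chosen (n B : Fin K → ℕ) (e : Choice n B) (A : Finset (Slot B)) : Finset (Elem n) :=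
  A.biUnion fun s => ((e s).map fun m => (⟨s.1, m⟩ : Elem n)).toFinset

/-- The Multinoulli Extension `F` of the set function `f`:
`F(x) = E[f(∪_{k,b} {e_k^b})]` for mutually independent `e_k^b ∼ Multi(p_k)`. -/
def ME (n B : Fin K → ℕ) (f : Finset (Elem n) → ℝ) (x : Elem n → ℝ) : ℝ :=
  ∑ e : Choice n B, f (chosen n B e Finset.univ) * jointProb n B x e

/-- The first-order partial derivative `∂G/∂x_i` at `x`. -/
def pderiv (n : Fin K → ℕ) (G : (Elem n → ℝ) → ℝ) (i : Elem n) (x : Elem n → ℝ) : ℝ :=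
  deriv (fun t => G (Function.update x i t)) (x i)

/-- The gradient `∇G(x)`. -/
def grad (n : Fin K → ℕ) (G : (Elem n → ℝ) → ℝ) (x : Elem n → ℝ) : Elem n → ℝ :=
  fun i => pderiv n G i x

/-- The second-order partial derivative `∂²G/∂x_i∂x_j` at `x`. -/
def pderiv2 (n : Fin K → ℕ) (G : (Elem n → ℝ) → ℝ) (i j : Elem n) (x : Elem n → ℝ) : ℝ :=
  pderiv n (fun y => pderiv n G j y) i x

/-- The Euclidean inner product on `∏_k ℝ^{n_k}`. -/
def inner' (n : Fin K → ℕ) (u v : Elem n → ℝ) : ℝ := ∑ i : Elem n, u i * v i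

/-- Membership in the product of simplices `∏_{k=1}^K Δ_{n_k}`. -/
def InSimplex (n : Fin K → ℕ) (x : Elem n → ℝ) : Prop :=
  (∀ i, 0 ≤ x i) ∧ ∀ k : Fin K, ∑ m : Fin (n k), x ⟨k, m⟩ ≤ 1

/-- Feasibility for the partition constraint: `|S ∩ V_k| ≤ B_k` for all `k`. -/
def Feasible (n B : Fin K → ℕ) (S : Finset (Elem n)) : Prop :=
  ∀ k : Fin K, (S.filter fun i => i.1 = k).card ≤ B k

/-- Monotonicity of a set function. -/
def MonotoneSet (n : Fin K → ℕ) (f : Finset (Elem n) → ℝ) : Prop :=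
  ∀ A B : Finset (Elem n), A ⊆ B → f A ≤ f B

/-- The marginal contribution `f(v|A) = f(A ∪ {v}) - f(A)`. -/
def marg (n : Fin K → ℕ) (f : Finset (Elem n) → ℝ) (v : Elem n) (A : Finset (Elem n)) : ℝ :=
  f (insert v A) - f A

/-- `α`-weak DR-submodularity: `f(v|A) ≥ α·f(v|B)` for all `A ⊆ B` and `v ∉ B`. -/
def WeaklyDR (n : Fin K → ℕ) (f : Finset (Elem n) → ℝ) (α : ℝ) : Prop :=
  ∀ A B : Finset (Elem n), A ⊆ B → ∀ v, v ∉ B → α * marg n f v B ≤ marg n f v A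

/-- `γ`-weak submodularity from below. -/
def WeaklyBelow (n : Fin K → ℕ) (f : Finset (Elem n) → ℝ) (γ : ℝ) : Prop :=
  ∀ A B : Finset (Elem n), A ⊆ B → γ * (f B - f A) ≤ ∑ v ∈ B \ A, marg n f v A

/-- `β`-weak submodularity from above. -/
def WeaklyAbove (n : Fin K → ℕ) (f : Finset (Elem n) → ℝ) (β : ℝ) : Prop :=
  ∀ A B : Finset (Elem n), A ⊆ B → ∑ v ∈ B \ A, marg n f v (B.erase v) ≤ β * (f B - f A)

/-- The scaled indicator vector `Σ_{k=1}^K (1/B_k)·1_{S∩V_k}`. -/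
def indVec (n B : Fin K → ℕ) (S : Finset (Elem n)) : Elem n → ℝ :=
  fun i => if i ∈ S then ((B i.1 : ℝ))⁻¹ else 0


/-- The (coordinatewise) auxiliary integral `∫_0^1 w(z)·∇F(z·x) dz`, where `z·x`
denotes coordinatewise scaling of `x` by `z`. -/
def auxGrad (n B : Fin K → ℕ) (f : Finset (Elem n) → ℝ) (w : ℝ → ℝ) (x : Elem n → ℝ) :
    Elem n → ℝ :=
  fun i => ∫ z in (0:ℝ)..1, w z * grad n (ME n B f) (fun j => z * x j) i


/-! By the product rule, `∂F/∂y_i` for `i ∈ V_k` is the sum, over the `B_k` trials of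
community `k`, of the expected marginal gain of `i` on the outcome of the other trials.
Weak DR-submodularity (one application per trial, then averaging over the `B_k` trials)
gives, on the product of simplices, `α (f(S) - F(y)) ≤ Σ_{i ∈ S} ∂_i F(y) / B_{k(i)}`.
Along the ray `g(z) = F(z x)`, with `g'(z) = ⟨x, ∇F(z x)⟩`, the function
`e^{α(z-1)} (α (f(S) - g(z)) - g'(z))` is the derivative of `e^{α(z-1)} (f(S) - g(z))`, whose
increment over `[0,1]` is `(1 - e^{-α}) f(S) - F(x)` because `F(0) = f(∅) = 0`. -/

theorem sum_apply_eq_sum_fiber_sum {ι : Type*} [Fintype ι] [DecidableEq ι] {β : ι → Type*}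
    [∀ i, Fintype (β i)] [∀ i, DecidableEq (β i)] {M : Type*} [AddCommMonoid M]
    (i : ι) (b₀ : β i) (Φ : β i → (∀ j, β j) → M)
    (hΦ : ∀ b e b', Φ b (Function.update e i b') = Φ b e) :
    ∑ e, Φ (e i) e = ∑ e with e i = b₀, ∑ b, Φ b e := by
  rw [← Finset.sum_product']
  refine Finset.sum_nbij' (fun e => (Function.update e i b₀, e i))
    (fun p => Function.update p.1 i p.2) (by simp) (by simp) (fun e _ => by simp) ?_
    (fun e _ => (hΦ _ _ _).symm)
  rintro ⟨e, b⟩ he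
  simp only [Finset.mem_product, Finset.mem_filter, Finset.mem_univ, true_and, and_true] at he
  simp [← he]

theorem sum_ite_sigma_mk_eq {κ : Type*} {β : κ → Type*} [DecidableEq κ] [∀ k, Fintype (β k)]
    [∀ k, DecidableEq (β k)] {M : Type*} [AddCommMonoid M] (k : κ) (i : Σ k, β k)
    (g : (Σ k, β k) → M) :
    ∑ m : β k, (if (⟨k, m⟩ : Σ k, β k) = i then g ⟨k, m⟩ else 0) =
      if i.1 = k then g i else 0 := by
  obtain ⟨k', m'⟩ := i
  by_cases h : k' = k
  · subst h
    simp
  · simp [h, Ne.symm h]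

theorem hasDerivAt_update_apply {ι : Type*} [DecidableEq ι] (y : ι → ℝ) (i j : ι) :
    HasDerivAt (fun t => Function.update y i t j) (if j = i then 1 else 0) (y i) := by
  simpa [Pi.single_apply] using hasDerivAt_pi.1 (hasDerivAt_update y i (y i)) j

theorem integral_exp_mul_sub_deriv {g g' : ℝ → ℝ} (hg : ∀ z, HasDerivAt g (g' z) z)
    (hg' : Continuous g') (α c : ℝ) :
    ∫ z in (0:ℝ)..1, Real.exp (α * (z - 1)) * (α * (c - g z) - g' z) =
      (1 - Real.exp (-α)) * c - g 1 + Real.exp (-α) * g 0 := by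
  have hH : ∀ z, HasDerivAt (fun z => Real.exp (α * (z - 1)) * (c - g z))
      (Real.exp (α * (z - 1)) * (α * (c - g z) - g' z)) z := fun z =>
    ((((hasDerivAt_id z).sub_const 1).const_mul α).exp.fun_mul ((hg z).const_sub c)).congr_deriv
      (by simp only [id]; ring)
  have hcont : Continuous g := continuous_iff_continuousAt.2 fun z => (hg z).continuousAt
  rw [intervalIntegral.integral_eq_sub_of_hasDerivAt (fun z _ => hH z)
    (by apply Continuous.intervalIntegrable; fun_prop)]
  simp only [sub_self, mul_zero, Real.exp_zero, one_mul, zero_sub, mul_neg, mul_one]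
  ring

variable {n B : Fin K → ℕ}

section Calculus

theorem pderiv_eq_fderiv {G : (Elem n → ℝ) → ℝ} {y : Elem n → ℝ} (hG : DifferentiableAt ℝ G y)
    (i : Elem n) : pderiv n G i y = fderiv ℝ G y (Pi.single i 1) := by
  rw [← Function.update_eq_self i y] at hG
  have h := (hG.hasFDerivAt.comp_hasDerivAt (y i) (hasDerivAt_update y i (y i))).deriv
  rwa [Function.update_eq_self] at h

theorem hasDerivAt_comp_smul {G : (Elem n → ℝ) → ℝ} (hG : Differentiable ℝ G)
    (x : Elem n → ℝ) (z : ℝ) :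
    HasDerivAt (fun z => G fun j => z * x j) (inner' n x (grad n G fun j => z * x j)) z := by
  have hray : HasDerivAt (fun z : ℝ => z • x) x z := by
    simpa using (hasDerivAt_id z).smul_const x
  have h := (hG (z • x)).hasFDerivAt.comp_hasDerivAt z hray
  have hx := (fderiv ℝ G (z • x)).toLinearMap.pi_apply_eq_sum_univ x
  simp only [ContinuousLinearMap.coe_coe, smul_eq_mul] at hx
  rw [hx] at h
  have hval : inner' n x (grad n G fun j => z * x j) =
      ∑ i, x i * fderiv ℝ G (z • x) (fun j => if i = j then 1 else 0) := by
    refine Finset.sum_congr rfl fun i _ => ?_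
    rw [grad, pderiv_eq_fderiv (hG _)]
    congr 2
    ext j
    simp [Pi.single_apply, eq_comm]
  rw [hval]
  exact h

theorem continuous_grad_comp_smul {G : (Elem n → ℝ) → ℝ} (hG : ContDiff ℝ 1 G)
    (x : Elem n → ℝ) (i : Elem n) :
    Continuous fun z : ℝ => grad n G (fun j => z * x j) i := by
  simp only [grad, pderiv_eq_fderiv (hG.differentiable one_ne_zero _)]
  exact ((hG.continuous_fderiv one_ne_zero).comp (by fun_prop)).clm_apply continuous_const

end Calculus

section Extension

theorem contDiff_prob {m : WithTop ℕ∞} (k : Fin K) (o : Option (Fin (n k))) :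
    ContDiff ℝ m fun y : Elem n → ℝ => prob n y k o := by
  cases o <;> simp only [prob] <;> fun_prop

theorem contDiff_ME {m : WithTop ℕ∞} (f : Finset (Elem n) → ℝ) : ContDiff ℝ m (ME n B f) := by
  have := fun k o => contDiff_prob (n := n) (m := m) k o
  unfold ME jointProb
  fun_prop

theorem sum_prob (y : Elem n → ℝ) (k : Fin K) : ∑ o, prob n y k o = 1 := by
  simp [Fintype.sum_option, prob]

theorem sum_jointProb (y : Elem n → ℝ) : ∑ e, jointProb n B y e = 1 := by
  simp only [jointProb, ← Fintype.prod_sum, sum_prob, Finset.prod_const_one]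

theorem prob_nonneg {y : Elem n → ℝ} (hy : InSimplex n y) (k : Fin K) (o : Option (Fin (n k))) :
    0 ≤ prob n y k o := by
  cases o with
  | some m => exact hy.1 _
  | none => exact sub_nonneg.2 (hy.2 k)

theorem jointProb_nonneg {y : Elem n → ℝ} (hy : InSimplex n y) (e : Choice n B) :
    0 ≤ jointProb n B y e :=
  Finset.prod_nonneg fun s _ => prob_nonneg hy s.1 (e s)

theorem InSimplex.const_mul {x : Elem n → ℝ} (hx : InSimplex n x) {z : ℝ}
    (hz : z ∈ Set.Icc (0 : ℝ) 1) : InSimplex n fun j => z * x j := by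
  refine ⟨fun i => mul_nonneg hz.1 (hx.1 i), fun k => ?_⟩
  rw [← Finset.mul_sum]
  exact mul_le_one₀ hz.2 (Finset.sum_nonneg fun m _ => hx.1 _) (hx.2 k)

theorem ME_zero (f : Finset (Elem n) → ℝ) : ME n B f 0 = f ∅ := by
  rw [ME, Finset.sum_eq_single fun _ => none]
  · have hempty : chosen n B (fun _ => none) Finset.univ = ∅ := by ext; simp [chosen]
    simp [hempty, jointProb, prob]
  · intro e _ he
    obtain ⟨s, hs⟩ := Function.ne_iff.1 he
    obtain ⟨m, hm⟩ := Option.ne_none_iff_exists'.1 hs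
    rw [jointProb, Finset.prod_eq_zero (Finset.mem_univ s) (by simp [hm, prob]), mul_zero]
  · simp

theorem chosen_univ (e : Choice n B) (s : Slot B) :
    chosen n B e Finset.univ =
      ((e s).map fun m => (⟨s.1, m⟩ : Elem n)).toFinset ∪ chosen n B e (Finset.univ.erase s) := by
  rw [chosen, ← Finset.insert_erase (Finset.mem_univ s), Finset.biUnion_insert,
    Finset.insert_erase (Finset.mem_univ s)]
  rfl

theorem chosen_update_of_notMem (e : Choice n B) {s : Slot B} (o : Option (Fin (n s.1)))
    {A : Finset (Slot B)} (hs : s ∉ A) :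
    chosen n B (Function.update e s o) A = chosen n B e A :=
  Finset.biUnion_congr rfl fun _ hs' => by rw [Function.update_of_ne (ne_of_mem_of_not_mem hs' hs)]

theorem prod_erase_prob_update (y : Elem n → ℝ) (e : Choice n B) (s : Slot B)
    (o : Option (Fin (n s.1))) :
    ∏ s' ∈ Finset.univ.erase s, prob n y s'.1 (Function.update e s o s') =
      ∏ s' ∈ Finset.univ.erase s, prob n y s'.1 (e s') :=
  Finset.prod_congr rfl fun _ hs' => by rw [Function.update_of_ne (Finset.ne_of_mem_erase hs')]

end Extension

section Gradient

/-- The derivative of `prob n y k o` with respect to the coordinate `y i`. -/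
def slope (n : Fin K → ℕ) (i : Elem n) (k : Fin K) : Option (Fin (n k)) → ℝ
  | some m => if (⟨k, m⟩ : Elem n) = i then 1 else 0
  | none => -if i.1 = k then 1 else 0

theorem hasDerivAt_prob_update (y : Elem n → ℝ) (i : Elem n) (k : Fin K)
    (o : Option (Fin (n k))) :
    HasDerivAt (fun t => prob n (Function.update y i t) k o) (slope n i k o) (y i) := by
  cases o with
  | some m => exact hasDerivAt_update_apply y i ⟨k, m⟩
  | none =>
    have h := (HasDerivAt.fun_sum (u := Finset.univ)
      fun m _ => hasDerivAt_update_apply y i ⟨k, m⟩).const_sub 1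
    rwa [sum_ite_sigma_mk_eq k i fun _ => (1 : ℝ)] at h

theorem hasDerivAt_jointProb_update (y : Elem n → ℝ) (i : Elem n) (e : Choice n B) :
    HasDerivAt (fun t => jointProb n B (Function.update y i t) e)
      (∑ s, (∏ s' ∈ Finset.univ.erase s, prob n y s'.1 (e s')) * slope n i s.1 (e s)) (y i) := by
  simpa [jointProb] using HasDerivAt.fun_finsetProd fun s _ => hasDerivAt_prob_update y i s.1 (e s)

theorem grad_ME (f : Finset (Elem n) → ℝ) (y : Elem n → ℝ) (i : Elem n) :
    grad n (ME n B f) y i = ∑ e, f (chosen n B e Finset.univ) *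
      ∑ s, (∏ s' ∈ Finset.univ.erase s, prob n y s'.1 (e s')) * slope n i s.1 (e s) :=
  (HasDerivAt.fun_sum fun e _ => (hasDerivAt_jointProb_update y i e).const_mul _).deriv

theorem sum_slope_mul (f : Finset (Elem n) → ℝ) (i : Elem n) (k : Fin K)
    (R : Finset (Elem n)) :
    ∑ o, slope n i k o * f ((o.map fun m => (⟨k, m⟩ : Elem n)).toFinset ∪ R) =
      if i.1 = k then marg n f i R else 0 := by
  have h := sum_ite_sigma_mk_eq k i fun j => f (insert j R)
  simp only [Fintype.sum_option, slope, Option.map_some, Option.toFinset_some,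
    Option.map_none, Option.toFinset_none, Finset.empty_union, ite_mul, one_mul, zero_mul,
    ← Finset.insert_eq, h, marg]
  split_ifs <;> ring

theorem sum_chosen_mul_slope (f : Finset (Elem n) → ℝ) (y : Elem n → ℝ) (i : Elem n)
    (s : Slot B) :
    ∑ e, f (chosen n B e Finset.univ) *
        ((∏ s' ∈ Finset.univ.erase s, prob n y s'.1 (e s')) * slope n i s.1 (e s)) =
      if i.1 = s.1 then ∑ e, jointProb n B y e * marg n f i (chosen n B e (Finset.univ.erase s))
      else 0 := by
  set Q : Choice n B → ℝ := fun e => ∏ s' ∈ Finset.univ.erase s, prob n y s'.1 (e s')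
  set R : Choice n B → Finset (Elem n) := fun e => chosen n B e (Finset.univ.erase s)
  have hQ : ∀ e o, Q (Function.update e s o) = Q e := fun e o => prod_erase_prob_update y e s o
  have hR : ∀ e o, R (Function.update e s o) = R e :=
    fun e o => chosen_update_of_notMem e o (Finset.notMem_erase s _)
  have hjoint : ∀ e, jointProb n B y e = prob n y s.1 (e s) * Q e :=
    fun e => (Finset.mul_prod_erase _ _ (Finset.mem_univ s)).symm
  -- condition both sides on the outcome of the trial `s`, which `Q` and `R` do not see
  simp_rw [chosen_univ _ s, hjoint]
  rw [sum_apply_eq_sum_fiber_sum s none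
      (fun o e => f ((o.map fun m => (⟨s.1, m⟩ : Elem n)).toFinset ∪ R e) * (Q e * slope n i s.1 o))
      (by intro o e o'; simp only [hQ, hR]),
    sum_apply_eq_sum_fiber_sum s none (fun o e => prob n y s.1 o * Q e * marg n f i (R e))
      (by intro o e o'; simp only [hQ, hR])]
  simp_rw [← Finset.sum_mul, sum_prob, one_mul]
  have hslope : ∀ e, ∑ o, f ((o.map fun m => (⟨s.1, m⟩ : Elem n)).toFinset ∪ R e) *
      (Q e * slope n i s.1 o) = Q e * if i.1 = s.1 then marg n f i (R e) else 0 := by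
    intro e
    rw [← sum_slope_mul, Finset.mul_sum]
    exact Finset.sum_congr rfl fun _ _ => by ring
  simp_rw [hslope]
  split_ifs <;> simp

theorem grad_ME_eq_sum_marg (f : Finset (Elem n) → ℝ) (y : Elem n → ℝ) (i : Elem n) :
    grad n (ME n B f) y i = ∑ b : Fin (B i.1),
      ∑ e, jointProb n B y e * marg n f i (chosen n B e (Finset.univ.erase ⟨i.1, b⟩)) := by
  rw [grad_ME]
  simp_rw [Finset.mul_sum]
  rw [Finset.sum_comm]
  simp_rw [sum_chosen_mul_slope, Fintype.sum_sigma]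
  rw [Fintype.sum_eq_single i.1 fun k hk => by simp [Ne.symm hk]]
  simp

end Gradient

section Submodular

variable {f : Finset (Elem n) → ℝ} {α : ℝ}

theorem marg_nonneg (hmono : MonotoneSet n f) (v : Elem n) (A : Finset (Elem n)) :
    0 ≤ marg n f v A :=
  sub_nonneg.2 (hmono _ _ (Finset.subset_insert v A))

theorem WeaklyDR.mul_marg_le (hDR : WeaklyDR n f α) (hmono : MonotoneSet n f)
    {A T : Finset (Elem n)} (hAT : A ⊆ T) (v : Elem n) :
    α * marg n f v T ≤ marg n f v A := by
  by_cases hv : v ∈ T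
  · simpa [marg, Finset.insert_eq_of_mem hv] using marg_nonneg hmono v A
  · exact hDR A T hAT v hv

theorem mul_sub_le_sum_of_mul_marg_le (R S : Finset (Elem n)) (t : Elem n → ℝ)
    (ht : ∀ i ∈ S, ∀ T, R ⊆ T → α * marg n f i T ≤ t i) :
    α * (f (S ∪ R) - f R) ≤ ∑ i ∈ S, t i := by
  induction S using Finset.induction_on with
  | empty => simp
  | insert a S ha ih =>
    rw [Finset.insert_union, Finset.sum_insert ha]
    have hstep := ht a (Finset.mem_insert_self a S) (S ∪ R) Finset.subset_union_right
    have hrest := ih fun i hi => ht i (Finset.mem_insert_of_mem hi)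
    rw [marg] at hstep
    linarith

theorem mul_sub_le_sum_marg_chosen (hDR : WeaklyDR n f α) (hmono : MonotoneSet n f)
    (hα : 0 ≤ α) (hB : ∀ k, 0 < B k) (e : Choice n B) (S : Finset (Elem n)) :
    α * (f S - f (chosen n B e Finset.univ)) ≤ ∑ i ∈ S, (B i.1 : ℝ)⁻¹ *
      ∑ b : Fin (B i.1), marg n f i (chosen n B e (Finset.univ.erase ⟨i.1, b⟩)) := by
  set C := chosen n B e Finset.univ
  calc α * (f S - f C) ≤ α * (f (S ∪ C) - f C) :=
        mul_le_mul_of_nonneg_left (sub_le_sub_right (hmono _ _ Finset.subset_union_left) _) hα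
    _ ≤ _ := by
      refine mul_sub_le_sum_of_mul_marg_le C S _ fun i _ T hCT => ?_
      have hBi : (0 : ℝ) < B i.1 := Nat.cast_pos.2 (hB i.1)
      rw [le_inv_mul_iff₀ hBi]
      calc (B i.1 : ℝ) * (α * marg n f i T) = ∑ b : Fin (B i.1), α * marg n f i T := by simp
        _ ≤ _ := Finset.sum_le_sum fun b _ => hDR.mul_marg_le hmono
            ((Finset.biUnion_subset_biUnion_of_subset_left _ (Finset.erase_subset _ _)).trans hCT) i

theorem mul_sub_ME_le_sum_grad (hDR : WeaklyDR n f α) (hmono : MonotoneSet n f) (hα : 0 ≤ α)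
    (hB : ∀ k, 0 < B k) {y : Elem n → ℝ} (hy : InSimplex n y) (S : Finset (Elem n)) :
    α * (f S - ME n B f y) ≤ ∑ i ∈ S, (B i.1 : ℝ)⁻¹ * grad n (ME n B f) y i := by
  have hlhs : α * (f S - ME n B f y) =
      ∑ e, jointProb n B y e * (α * (f S - f (chosen n B e Finset.univ))) := by
    simp only [ME, mul_sub, Finset.mul_sum, Finset.sum_sub_distrib, ← Finset.sum_mul,
      sum_jointProb, one_mul]
    exact congrArg _ (Finset.sum_congr rfl fun _ _ => by ring)
  have hrhs : ∑ i ∈ S, (B i.1 : ℝ)⁻¹ * grad n (ME n B f) y i =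
      ∑ e, jointProb n B y e * ∑ i ∈ S, (B i.1 : ℝ)⁻¹ *
        ∑ b : Fin (B i.1), marg n f i (chosen n B e (Finset.univ.erase ⟨i.1, b⟩)) := by
    simp only [grad_ME_eq_sum_marg, Finset.mul_sum]
    rw [Finset.sum_comm]
    refine Finset.sum_congr rfl fun i _ => ?_
    rw [Finset.sum_comm]
    exact Finset.sum_congr rfl fun _ _ => Finset.sum_congr rfl fun _ _ => by ring
  rw [hlhs, hrhs]
  exact Finset.sum_le_sum fun e _ => mul_le_mul_of_nonneg_left
    (mul_sub_le_sum_marg_chosen hDR hmono hα hB e S) (jointProb_nonneg hy e)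

end Submodular

theorem inner'_auxGrad (f : Finset (Elem n) → ℝ) {w : ℝ → ℝ} (hw : Continuous w)
    (u x : Elem n → ℝ) :
    inner' n u (auxGrad n B f w x) =
      ∫ z in (0:ℝ)..1, w z * inner' n u (grad n (ME n B f) fun j => z * x j) := by
  have hgrad := continuous_grad_comp_smul (contDiff_ME (B := B) f) x
  simp only [inner', auxGrad, Finset.mul_sum]
  rw [intervalIntegral.integral_finsetSum fun i _ => by
    apply Continuous.intervalIntegrable; fun_prop]
  refine Finset.sum_congr rfl fun i _ => ?_
  rw [← intervalIntegral.integral_const_mul]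
  exact intervalIntegral.integral_congr fun z _ => by ring

theorem inner'_indVec_sub (S : Finset (Elem n)) (x v : Elem n → ℝ) :
    inner' n (fun i => indVec n B S i - x i) v =
      ∑ i ∈ S, (B i.1 : ℝ)⁻¹ * v i - inner' n x v := by
  simp only [inner', indVec, sub_mul, Finset.sum_sub_distrib, ite_mul, zero_mul,
    Finset.sum_ite_mem, Finset.univ_inter]

theorem multinoulliExtension_aux_dr_general {K : ℕ} (n B : Fin K → ℕ)
    (hB : ∀ k, 0 < B k)
    (f : Finset (Elem n) → ℝ)
    (hmono : MonotoneSet n f)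
    (α : ℝ) (hα0 : 0 < α) (hDR : WeaklyDR n f α)
    (hfempty : f ∅ = 0)
    (x : Elem n → ℝ) (hx : InSimplex n x)
    (S : Finset (Elem n)) :
    (1 - Real.exp (-α)) * f S - ME n B f x ≤
      inner' n (fun i => indVec n B S i - x i)
        (auxGrad n B f (fun z => Real.exp (α * (z - 1))) x) := by
  have hME : ContDiff ℝ 1 (ME n B f) := contDiff_ME f
  have hgrad := continuous_grad_comp_smul hME x
  have hg : Continuous fun z : ℝ => ME n B f fun j => z * x j := hME.continuous.comp (by fun_prop)
  have hg' : Continuous fun z : ℝ => inner' n x (grad n (ME n B f) fun j => z * x j) := by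
    unfold inner'
    fun_prop
  rw [inner'_auxGrad f (by fun_prop)]
  calc (1 - Real.exp (-α)) * f S - ME n B f x
      = ∫ z in (0:ℝ)..1, Real.exp (α * (z - 1)) * (α * (f S - ME n B f (fun j => z * x j)) -
          inner' n x (grad n (ME n B f) fun j => z * x j)) := by
        rw [integral_exp_mul_sub_deriv (hasDerivAt_comp_smul (hME.differentiable one_ne_zero) x)
          hg']
        simp [← Pi.zero_def, ME_zero, hfempty]
    _ ≤ _ := by
      refine intervalIntegral.integral_mono_on zero_le_one
        (by apply Continuous.intervalIntegrable; fun_prop)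
        (by apply Continuous.intervalIntegrable; simp only [inner'_indVec_sub]; fun_prop)
        fun z hz => ?_
      rw [inner'_indVec_sub]
      gcongr
      exact mul_sub_ME_le_sum_grad hDR hmono hα0.le hB (hx.const_mul hz) S

theorem multinoulliExtension_aux_dr {K : ℕ} (n B : Fin K → ℕ) (hn : ∀ k, 1 ≤ n k)
    (hB : ∀ k, 0 < B k) (hBn : ∀ k, B k ≤ n k)
    (f : Finset (Elem n) → ℝ) (hf0 : ∀ S, 0 ≤ f S)
    (hmono : MonotoneSet n f)
    (α : ℝ) (hα0 : 0 < α) (hα1 : α ≤ 1) (hDR : WeaklyDR n f α)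
    (hfempty : f ∅ = 0)
    (x : Elem n → ℝ) (hx : InSimplex n x)
    (S : Finset (Elem n)) (hS : Feasible n B S) :
    (1 - Real.exp (-α)) * f S - ME n B f x ≤
      inner' n (fun i => indVec n B S i - x i)
        (auxGrad n B f (fun z => Real.exp (α * (z - 1))) x) :=
  multinoulliExtension_aux_dr_general n B hB f hmono α hα0 hDR hfempty x hx S

end Multinoulli
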